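/- For the algebra D₃, define polynomials H_n ∈ ℝ[x₁,x₂,x₃] recursively by H₁ = x₁ and H_{n+1} = (x₁² − x₂² − x₃²)·∂H_n/∂x₁ + 2x₁x₂·∂H_n/∂x₂ + 2x₁x₃·∂H_n/∂x₃ (this is the recursion h^(n+1) = a^i_{jk} u^j u^k ∂h^(n)/∂u^i for D₃), and let Ξ be the derivation Ξ(f) = x₂·∂f/∂x₃ − x₃·∂f/∂x₂. Then for every n ≥ 1: Ξ(H_{n+1}) = 2x₁·Ξ(H_n). Consequently Ξ(H_n) = 0 for all n ≥ 1, so all obstructions for D₃ vanish. -/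
import Mathlib


open MvPolynomial

/-- The recursively defined conserved densities of the dispersionless KdV hierarchy
for the Jordan algebra `D₃`: `H₁ = x₁` and
`H_{n+1} = (x₁² − x₂² − x₃²)∂H_n/∂x₁ + 2x₁x₂∂H_n/∂x₂ + 2x₁x₃∂H_n/∂x₃`
(the variables `x₁, x₂, x₃` are `X 0, X 1, X 2`; the value at `0` is junk). -/
noncomputable def Hpoly : ℕ → MvPolynomial (Fin 3) ℝ
  | 0 => 0
  | 1 => X 0
  | (n + 2) =>
      (X 0 ^ 2 - X 1 ^ 2 - X 2 ^ 2) * pderiv 0 (Hpoly (n + 1))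
        + 2 * X 0 * X 1 * pderiv 1 (Hpoly (n + 1))
        + 2 * X 0 * X 2 * pderiv 2 (Hpoly (n + 1))

/-- The obstruction vector field `Ξ = Ξ₂₃` of `D₃`: `Ξ(f) = x₂∂f/∂x₃ − x₃∂f/∂x₂`. -/
noncomputable def XiD (p : MvPolynomial (Fin 3) ℝ) : MvPolynomial (Fin 3) ℝ :=
  X 1 * pderiv 2 p - X 2 * pderiv 1 p

lemma my_pderiv_two (i : Fin 3) : pderiv i (2 : MvPolynomial (Fin 3) ℝ) = 0 := by
  have h : (2 : MvPolynomial (Fin 3) ℝ) = C 2 := (map_ofNat C 2).symm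
  rw [h, pderiv_C]

lemma my_pderiv_comm (i j : Fin 3) (p : MvPolynomial (Fin 3) ℝ) :
    pderiv i (pderiv j p) = pderiv j (pderiv i p) := by
  induction p using MvPolynomial.induction_on with
  | C a => simp [pderiv_C]
  | add p q hp hq => simp [map_add, hp, hq]
  | mul_X p k hp =>
      simp only [pderiv_mul, map_add, pderiv_X, hp, Pi.single_apply, apply_ite (pderiv i),
        apply_ite (pderiv j), pderiv_one, pderiv_C, map_zero, ite_self, mul_zero, add_zero]
      ring

lemma xi_key (p : MvPolynomial (Fin 3) ℝ) :
    XiD ((X 0 ^ 2 - X 1 ^ 2 - X 2 ^ 2) * pderiv 0 p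
        + 2 * X 0 * X 1 * pderiv 1 p + 2 * X 0 * X 2 * pderiv 2 p)
      = (X 0 ^ 2 - X 1 ^ 2 - X 2 ^ 2) * pderiv 0 (XiD p)
        + 2 * X 0 * X 1 * pderiv 1 (XiD p) + 2 * X 0 * X 2 * pderiv 2 (XiD p) := by
  simp only [XiD, map_add, map_sub, pderiv_mul, pderiv_X, pderiv_pow, my_pderiv_two,
    Pi.single_apply]
  norm_num [show ((0:Fin 3) = 2) ↔ False from by decide, show ((1:Fin 3) = 2) ↔ False from by decide,
    show ((2:Fin 3) = 1) ↔ False from by decide, show ((2:Fin 3) = 0) ↔ False from by decide,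
    show ((0:Fin 3) = 1) ↔ False from by decide, show ((1:Fin 3) = 0) ↔ False from by decide]
  rw [my_pderiv_comm 2 0 p, my_pderiv_comm 2 1 p, my_pderiv_comm 1 0 p]
  ring

lemma xi_zero : ∀ n : ℕ, 1 ≤ n → XiD (Hpoly n) = 0 := by
  intro n hn
  induction n with
  | zero => omega
  | succ m ih =>
      rcases Nat.eq_or_lt_of_le hn with h | h
      · have : m = 0 := by omega
        subst this
        simp [Hpoly, XiD, pderiv_X_of_ne]
      · have hm : 1 ≤ m := by omega
        have hrec : Hpoly (m + 1) =
            (X 0 ^ 2 - X 1 ^ 2 - X 2 ^ 2) * pderiv 0 (Hpoly m)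
              + 2 * X 0 * X 1 * pderiv 1 (Hpoly m)
              + 2 * X 0 * X 2 * pderiv 2 (Hpoly m) := by
          obtain ⟨k, rfl⟩ : ∃ k, m = k + 1 := ⟨m - 1, by omega⟩
          rfl
        rw [hrec, xi_key, ih hm]
        simp

/-- For the algebra `D₃`, the recursively defined densities satisfy
`Ξ(H_{n+1}) = 2x₁·Ξ(H_n)` for every `n ≥ 1`; consequently `Ξ(H_n) = 0` for all
`n ≥ 1`, so all obstructions for `D₃` vanish. -/
theorem d3_obstructions_vanish :
    (∀ n : ℕ, 1 ≤ n → XiD (Hpoly (n + 1)) = 2 * X 0 * XiD (Hpoly n)) ∧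
      (∀ n : ℕ, 1 ≤ n → XiD (Hpoly n) = 0) := by
  refine ⟨fun n hn => ?_, xi_zero⟩
  rw [xi_zero n hn, xi_zero (n + 1) (by omega)]
  ring
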